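/- arXiv:1301.2474 — 11 statements merged into one kernel-verified Lean document; each statement's English description precedes it below -/
import Mathlib

section
/- If a family F of cuts of a graph G separates every pair consisting of a maximal clique and a maximal stable set that are disjoint, then the family F together with the 2n cuts (N[x], V∖N[x]) and (N(x), V∖N(x)) for all vertices x separates every pair of a disjoint clique and stable set. -/
/-!
Extend the clique `K` and the stable set `S` to a maximal clique `K'` and a maximal stable set
`S'`. If these are disjoint, a cut of `F` separates them, hence `K` and `S`. Otherwise `K'` and
`S'` share a vertex `x`; then `K' ⊆ N[x]` and `S' ∩ N(x) = ∅`, so `N(x)` separates `K` from `S`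
when `x ∈ S`, and `N[x]` does when `x ∉ S`.
-/

namespace SimpleGraph

variable {V : Type*} {G : SimpleGraph V} {s : Set V} {x : V}

theorem IsClique.diff_singleton_subset_neighborSet (hs : G.IsClique s) (hx : x ∈ s) :
    s \ {x} ⊆ G.neighborSet x :=
  fun _ ⟨hy, hyx⟩ => hs hx hy (Ne.symm hyx)

theorem IsIndepSet.subset_compl_neighborSet (hs : G.IsIndepSet s) (hx : x ∈ s) :
    s ⊆ (G.neighborSet x)ᶜ := by
  intro y hy hxy
  exact hs hx hy (G.ne_of_adj hxy) hxy

theorem exists_neighborhood_cut_of_mem_inter {K S K' S' : Set V}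
    (hK' : G.IsClique K') (hS' : G.IsIndepSet S') (hKK' : K ⊆ K') (hSS' : S ⊆ S')
    (hdisj : Disjoint K S) (hxK' : x ∈ K') (hxS' : x ∈ S') :
    ∃ A, (A = insert x (G.neighborSet x) ∨ A = G.neighborSet x) ∧ K ⊆ A ∧ S ⊆ Aᶜ := by
  have hK : K ⊆ insert x (G.neighborSet x) :=
    hKK'.trans (Set.sdiff_singleton_subset_iff.1 (hK'.diff_singleton_subset_neighborSet hxK'))
  have hS : S ⊆ (G.neighborSet x)ᶜ := hSS'.trans (hS'.subset_compl_neighborSet hxS')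
  by_cases hxS : x ∈ S
  · have hxK : x ∉ K := hdisj.notMem_of_mem_right hxS
    exact ⟨_, Or.inr rfl, (Set.subset_insert_iff_of_notMem hxK).1 hK, hS⟩
  · refine ⟨_, Or.inl rfl, hK, fun y hy hyN => ?_⟩
    rcases hyN with rfl | hyN
    · exact hxS hy
    · exact hS hy hyN

end SimpleGraph

/-- If a family `F` of cuts separates every disjoint pair of a maximal clique and a maximal
stable set, then `F` together with the cuts `(N[x], N[x]ᶜ)` and `(N(x), N(x)ᶜ)` for all
vertices `x` separates every disjoint clique–stable-set pair. -/
theorem maximal_separation_suffices {V : Type*} [Fintype V] (G : SimpleGraph V)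
    (F : Set (Set V))
    (hF : ∀ K S : Set V, Maximal G.IsClique K → Maximal Gᶜ.IsClique S → Disjoint K S →
      ∃ A ∈ F, K ⊆ A ∧ S ⊆ Aᶜ) :
    ∀ K S : Set V, G.IsClique K → Gᶜ.IsClique S → Disjoint K S →
      ∃ A, (A ∈ F ∨ ∃ x : V, A = insert x (G.neighborSet x) ∨ A = G.neighborSet x) ∧
        K ⊆ A ∧ S ⊆ Aᶜ := by
  intro K S hK hS hdisj
  obtain ⟨K', hKK', hK'⟩ := Finite.exists_le_maximal hK
  obtain ⟨S', hSS', hS'⟩ := Finite.exists_le_maximal hS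
  by_cases hdisj' : Disjoint K' S'
  · obtain ⟨A, hA, hK'A, hS'A⟩ := hF K' S' hK' hS' hdisj'
    exact ⟨A, Or.inl hA, hKK'.trans hK'A, hSS'.trans hS'A⟩
  · obtain ⟨x, hxK', hxS'⟩ := Set.not_disjoint_iff.1 hdisj'
    obtain ⟨A, hAx, hKA, hSA⟩ :=
      G.exists_neighborhood_cut_of_mem_inter hK'.1 (G.isClique_compl.1 hS'.1) hKK' hSS'
        hdisj hxK' hxS'
    exact ⟨A, Or.inr ⟨x, hAx⟩, hKA, hSA⟩
end

section
/- If a class of graphs has the property that every graph in it on n vertices has at most P(n) maximal cliques for a polynomial P, then every graph G in the class has a CS-separator of size at most P(n) + 2n: namely, for each maximal clique K the cut (K, V∖K), together with the cuts (N[x], V∖N[x]) and (N(x), V∖N(x)) for all vertices x. -/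
/-!
Extend the clique `K` to a maximal clique `K'`. If `K'` misses the stable set `S`, the cut
`(K', K'ᶜ)` separates `K` from `S`. Otherwise pick `x ∈ K' ∩ S`: every vertex of `K` is a
neighbour of `x` (it lies in `K'` and differs from `x ∉ K`), while no vertex of `S` is, so the
cut `(N(x), N(x)ᶜ)` separates. The size bound is a count of the three subfamilies.
-/

theorem Set.ncard_setOf_exists_eq_le {ι α : Type*} [Finite ι] (f : ι → α) :
    {a | ∃ i, a = f i}.ncard ≤ Nat.card ι := by
  have hrange : {a | ∃ i, a = f i} = Set.range f := by ext; simp [eq_comm]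
  rw [hrange, ← Nat.card_coe_set_eq]
  exact Finite.card_range_le f

namespace SimpleGraph

variable {V : Type*} (G : SimpleGraph V)

def IsCSSeparator (F : Set (Set V)) : Prop :=
  ∀ K S : Set V, G.IsClique K → Gᶜ.IsClique S → Disjoint K S → ∃ A ∈ F, K ⊆ A ∧ S ⊆ Aᶜ

variable {G}

theorem IsCSSeparator.mono {F F' : Set (Set V)} (hF : G.IsCSSeparator F) (h : F ⊆ F') :
    G.IsCSSeparator F' := fun K S hK hS hKS ↦
  let ⟨A, hA, hKA, hSA⟩ := hF K S hK hS hKS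
  ⟨A, h hA, hKA, hSA⟩

theorem IsClique.diff_singleton_subset_neighborSet_s4 {K : Set V} (hK : G.IsClique K) {x : V}
    (hx : x ∈ K) : K \ {x} ⊆ G.neighborSet x :=
  fun _ ⟨hy, hyx⟩ ↦ hK hx hy (Ne.symm hyx)

theorem subset_compl_neighborSet_of_isClique_compl {S : Set V} (hS : Gᶜ.IsClique S) {x : V}
    (hx : x ∈ S) : S ⊆ (G.neighborSet x)ᶜ :=
  fun _ hy hxy ↦ (hS hx hy (G.ne_of_adj hxy)).2 hxy

theorem isCSSeparator_maximalCliques_union_neighborSets [Finite V] :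
    G.IsCSSeparator ({A | Maximal G.IsClique A} ∪ {A | ∃ x, A = G.neighborSet x}) := by
  intro K S hK hS hKS
  obtain ⟨K', hKK', hK'⟩ := Finite.exists_le_maximal hK
  by_cases hK'S : Disjoint K' S
  · exact ⟨K', .inl hK', hKK', hK'S.subset_compl_left⟩
  obtain ⟨x, hxK', hxS⟩ := Set.not_disjoint_iff.mp hK'S
  refine ⟨G.neighborSet x, .inr ⟨x, rfl⟩, ?_, subset_compl_neighborSet_of_isClique_compl hS hxS⟩
  have hKx : K ⊆ K' \ {x} := fun y hy ↦ ⟨hKK' hy, hKS.ne_of_mem hy hxS⟩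
  exact hKx.trans (hK'.prop.diff_singleton_subset_neighborSet_s4 hxK')

end SimpleGraph

open SimpleGraph in
/-- If a graph on `n` vertices has at most `P(n)` maximal cliques, then the family consisting
of the cuts `(K, Kᶜ)` for maximal cliques `K`, together with `(N[x], N[x]ᶜ)` and
`(N(x), N(x)ᶜ)` for all vertices `x`, is a CS-separator of size at most `P(n) + 2n`. -/
theorem cs_separator_from_few_maximal_cliques {V : Type*} [Fintype V] (G : SimpleGraph V)
    (P : Polynomial ℕ)
    (h : {K : Set V | Maximal G.IsClique K}.ncard ≤ P.eval (Fintype.card V)) :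
    ∀ F : Set (Set V),
      F = {A | Maximal G.IsClique A} ∪ {A | ∃ x : V, A = insert x (G.neighborSet x)} ∪
          {A | ∃ x : V, A = G.neighborSet x} →
      F.ncard ≤ P.eval (Fintype.card V) + 2 * Fintype.card V ∧
        ∀ K S : Set V, G.IsClique K → Gᶜ.IsClique S → Disjoint K S →
          ∃ A ∈ F, K ⊆ A ∧ S ⊆ Aᶜ := by
  rintro F rfl
  refine ⟨?_, isCSSeparator_maximalCliques_union_neighborSets.mono ?_⟩
  · have hclosed := Set.ncard_setOf_exists_eq_le fun x ↦ insert x (G.neighborSet x)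
    have hopen := Set.ncard_setOf_exists_eq_le G.neighborSet
    rw [Nat.card_eq_fintype_card] at hclosed hopen
    calc _ ≤ _ + _ := Set.ncard_union_le _ _
      _ ≤ _ + _ + _ := Nat.add_le_add_right (Set.ncard_union_le _ _) _
      _ ≤ P.eval (Fintype.card V) + Fintype.card V + Fintype.card V := by gcongr
      _ = P.eval (Fintype.card V) + 2 * Fintype.card V := by ring
  · exact Set.union_subset_union_left _ Set.subset_union_left
end

section
/- For every antisymmetric real n×n matrix A (i.e., Aᵀ = −A), there exists a vector w ∈ ℝⁿ with w ≥ 0 coordinatewise, w ≠ 0, and Aw ≥ 0 coordinatewise. -/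
/-!
Separating the image `A(Δ)` of the standard simplex, a compact convex set, from the closed cone of
nonnegative vectors gives a Gordan-type alternative: either `A w ≥ 0` for some `w ∈ Δ`, or some
`y ≥ 0` has `yᵀA < 0` in every coordinate. For antisymmetric `A` we have `yᵀA = -(A y)ᵀ`, so in
the second case `y` itself is a solution.
-/

open Matrix

theorem Matrix.exists_mem_stdSimplex_mulVec_nonneg_or_exists_nonneg_vecMul_neg
    {m n : Type*} [Fintype m] [Fintype n] (A : Matrix m n ℝ) :
    (∃ w ∈ stdSimplex ℝ n, 0 ≤ A *ᵥ w) ∨ ∃ y, 0 ≤ y ∧ ∀ j, (y ᵥ* A) j < 0 := by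
  classical
  refine or_iff_not_imp_left.2 fun h => ?_
  have hdisj : Disjoint (A.mulVecLin '' stdSimplex ℝ n) (ProperCone.positive ℝ (m → ℝ)) := by
    rw [Set.disjoint_left]
    rintro _ ⟨w, hw, rfl⟩ hpos
    exact h ⟨w, hw, hpos⟩
  obtain ⟨f, hf_nonneg, hf_neg⟩ := (ProperCone.positive ℝ (m → ℝ)).hyperplane_separation
    ((convex_stdSimplex ℝ n).linear_image _)
    ((isCompact_stdSimplex ℝ n).image A.mulVecLin.continuous_of_finiteDimensional) hdisj
  set y : m → ℝ := fun i => f (Pi.single i 1)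
  have hf_eq_dotProduct : ∀ x, f x = y ⬝ᵥ x := fun x => by
    conv_lhs => rw [pi_eq_sum_univ' x]
    simp only [map_sum, map_smul, smul_eq_mul, dotProduct, y, mul_comm]
  refine ⟨y, fun i => hf_nonneg _ (Pi.single_nonneg.2 zero_le_one), fun j => ?_⟩
  calc (y ᵥ* A) j = y ⬝ᵥ (A *ᵥ Pi.single j 1) := by rw [dotProduct_mulVec, dotProduct_single_one]
   _ = f (A *ᵥ Pi.single j 1) := (hf_eq_dotProduct _).symm
   _ < 0 := hf_neg _ ⟨_, single_mem_stdSimplex ℝ j, rfl⟩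

/-- For every antisymmetric real `n × n` matrix `A`, there is a nonzero nonnegative vector `w`
with `A w ≥ 0` coordinatewise. -/
theorem antisymmetric_farkas {n : ℕ} (hn : 0 < n) (A : Matrix (Fin n) (Fin n) ℝ)
    (hA : A.transpose = -A) :
    ∃ w : Fin n → ℝ, (∀ i, 0 ≤ w i) ∧ w ≠ 0 ∧ ∀ i, 0 ≤ A.mulVec w i := by
  have hvecMul : ∀ y, y ᵥ* A = -(A *ᵥ y) := fun y => by rw [← mulVec_transpose, hA, neg_mulVec]
  rcases A.exists_mem_stdSimplex_mulVec_nonneg_or_exists_nonneg_vecMul_neg with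
    ⟨w, hw, hAw⟩ | ⟨y, hy, hyA⟩
  · refine ⟨w, hw.1, ?_, hAw⟩
    rintro rfl
    simpa using hw.2
  · have hAy : ∀ i, 0 < (A *ᵥ y) i := fun i => by simpa [hvecMul] using hyA i
    refine ⟨y, hy, ?_, fun i => (hAy i).le⟩
    rintro rfl
    simpa using hAy ⟨0, hn⟩
end

section
/- For every finite oriented graph G = (V,E) (no 2-cycles), there exists a weight function w : V → [0,1] with ∑_{v∈V} w(v) = 1 such that for every vertex x, w(N⁺(x)) ≥ w(N⁻(x)), where N⁺(x) and N⁻(x) denote the out-neighborhood and in-neighborhood of x. -/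
/-!
Let `A` be the arc-indicator matrix of the graph. The zero-sum game with payoff matrix `A - Aᵀ`
is symmetric, so by von Neumann's minimax theorem it has value `0`: some mixed strategy `w`
satisfies `(A - Aᵀ) w ≥ 0` coordinatewise. Since `(A w) x = w(N⁺(x))` and `(Aᵀ w) x = w(N⁻(x))`,
this `w` is the required weight function.
-/

open Finset Matrix

theorem LinearMap.exists_isSaddlePointOn {E F : Type*}
    [NormedAddCommGroup E] [NormedSpace ℝ E] [FiniteDimensional ℝ E]
    [NormedAddCommGroup F] [NormedSpace ℝ F] [FiniteDimensional ℝ F]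
    (B : E →ₗ[ℝ] F →ₗ[ℝ] ℝ) {X : Set E} {Y : Set F}
    (neX : X.Nonempty) (cX : Convex ℝ X) (kX : IsCompact X)
    (neY : Y.Nonempty) (cY : Convex ℝ Y) (kY : IsCompact Y) :
    ∃ a ∈ X, ∃ b ∈ Y, IsSaddlePointOn X Y (fun x y => B x y) a b :=
  Sion.exists_isSaddlePointOn neX cX kX
    (fun y _ =>
      (B.flip y).continuous_of_finiteDimensional.lowerSemicontinuous.lowerSemicontinuousOn X)
    (fun y _ => ((B.flip y).convexOn cX).quasiconvexOn)
    cY neY kY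
    (fun x _ => (B x).continuous_of_finiteDimensional.upperSemicontinuous.upperSemicontinuousOn Y)
    (fun x _ => ((B x).concaveOn cY).quasiconcaveOn)

theorem LinearMap.IsAlt.exists_forall_nonneg {E : Type*}
    [NormedAddCommGroup E] [NormedSpace ℝ E] [FiniteDimensional ℝ E]
    {B : E →ₗ[ℝ] E →ₗ[ℝ] ℝ} (hB : B.IsAlt) {X : Set E}
    (neX : X.Nonempty) (cX : Convex ℝ X) (kX : IsCompact X) :
    ∃ b ∈ X, ∀ x ∈ X, 0 ≤ B x b := by
  obtain ⟨a, ha, b, hb, hab⟩ := B.exists_isSaddlePointOn neX cX kX neX cX kX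
  exact ⟨b, hb, fun x hx => (hB a).symm.trans_le (hab x hx a ha)⟩

theorem Matrix.isAlt_toLinearMap₂'_sub_transpose {n R : Type*} [Fintype n] [DecidableEq n]
    [CommRing R] (A : Matrix n n R) :
    (toLinearMap₂' R (A - Aᵀ) : (n → R) →ₗ[R] (n → R) →ₗ[R] R).IsAlt := by
  intro v
  rw [toLinearMap₂'_apply', sub_mulVec, dotProduct_sub, dotProduct_mulVec v Aᵀ, vecMul_transpose,
    dotProduct_comm, sub_self]

theorem Matrix.exists_mem_stdSimplex_transpose_mulVec_le {n : Type*} [Fintype n] [Nonempty n]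
    (A : Matrix n n ℝ) : ∃ w ∈ stdSimplex ℝ n, Aᵀ *ᵥ w ≤ A *ᵥ w := by
  classical
  obtain ⟨w, hw, hnonneg⟩ := A.isAlt_toLinearMap₂'_sub_transpose.exists_forall_nonneg
    ⟨_, single_mem_stdSimplex ℝ (Classical.arbitrary n)⟩ (convex_stdSimplex ℝ n)
    (isCompact_stdSimplex ℝ n)
  refine ⟨w, hw, fun i => sub_nonneg.mp ?_⟩
  simpa only [toLinearMap₂'_apply', single_one_dotProduct, sub_mulVec, Pi.sub_apply]
    using hnonneg _ (single_mem_stdSimplex ℝ i)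

theorem Matrix.of_ite_mulVec_apply {n : Type*} [Fintype n] (r : n → n → Prop) [DecidableRel r]
    (w : n → ℝ) (x : n) :
    ((of fun x y => if r x y then 1 else 0 : Matrix n n ℝ) *ᵥ w) x =
      ∑ y ∈ univ.filter (r x), w y := by
  simp only [mulVec, dotProduct, of_apply, ite_mul, one_mul, zero_mul, sum_filter]

theorem oriented_graph_weight_function_general {V : Type*} [Fintype V] [Nonempty V]
    (E : V → V → Prop) [DecidableRel E] :
    ∃ w : V → ℝ, (∀ v, 0 ≤ w v ∧ w v ≤ 1) ∧ (∑ v, w v = 1) ∧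
      ∀ x, ∑ y ∈ Finset.univ.filter (fun y => E y x), w y ≤
           ∑ y ∈ Finset.univ.filter (fun y => E x y), w y := by
  obtain ⟨w, hw, hle⟩ :=
    (of fun x y => if E x y then (1 : ℝ) else 0).exists_mem_stdSimplex_transpose_mulVec_le
  refine ⟨w, fun v => mem_Icc_of_mem_stdSimplex hw v, hw.2, fun x => ?_⟩
  exact (of_ite_mulVec_apply (fun y x => E x y) w x).symm.trans_le
    ((hle x).trans_eq (of_ite_mulVec_apply E w x))

/-- For every finite oriented graph there is a probability weight function `w` on the vertices
such that every vertex's out-neighborhood weighs at least as much as its in-neighborhood. -/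
theorem oriented_graph_weight_function {V : Type*} [Fintype V] [Nonempty V]
    (E : V → V → Prop) [DecidableRel E] (hE : ∀ x y, E x y → ¬ E y x) :
    ∃ w : V → ℝ, (∀ v, 0 ≤ w v ∧ w v ≤ 1) ∧ (∑ v, w v = 1) ∧
      ∀ x, ∑ y ∈ Finset.univ.filter (fun y => E y x), w y ≤
           ∑ y ∈ Finset.univ.filter (fun y => E x y), w y :=
  oriented_graph_weight_function_general E
end

section
/- If V₁ and V₂ are disjoint nonempty completely non-adjacent vertex subsets of a graph G, V₃ = V ∖ (V₁ ∪ V₂), and G[V₁ ∪ V₃] has a CS-separator F₁ while G[V₂ ∪ V₃] has a CS-separator F₂, then the family obtained by extending each cut (U,W) of F₁ to (U, W ∪ V₂) and each cut (U,W) of F₂ to (U, W ∪ V₁) is a CS-separator for G of size |F₁| + |F₂|. -/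
/-!
A clique cannot meet both of two disjoint, completely non-adjacent sets `V₁` and `V₂`; say it
avoids `V₂`, so it lies in `V₁ ∪ V₃ = V₂ᶜ`. A stable set `S` disjoint from it is then handled by
the cut of `F₁` separating the clique from `S \ V₂`, and adding `V₂` to the stable side of that
cut absorbs the rest of `S`.
-/

namespace Set

variable {α : Type*}

theorem union_compl_union_eq_compl {A B : Set α} (h : Disjoint A B) :
    A ∪ (A ∪ B)ᶜ = Bᶜ := by
  rw [compl_union, union_inter_distrib_left, union_compl_self, univ_inter,
    union_eq_right.2 (subset_compl_iff_disjoint_right.2 h)]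

def IsBipartition (X : Set α) (p : Set α × Set α) : Prop :=
  p.1 ∪ p.2 = X ∧ Disjoint p.1 p.2

theorem IsBipartition.union_snd_compl {B : Set α} {p : Set α × Set α}
    (hp : IsBipartition Bᶜ p) : IsBipartition univ (p.1, p.2 ∪ B) := by
  obtain ⟨hcover, hdisj⟩ := hp
  refine ⟨by rw [← union_assoc, hcover, compl_union_self], disjoint_union_right.2 ⟨hdisj, ?_⟩⟩
  exact subset_compl_iff_disjoint_right.1 (hcover ▸ subset_union_left)

end Set

namespace SimpleGraph

variable {V : Type*} (G : SimpleGraph V)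

def IsCSSeparatorOn (X : Set V) (F : Finset (Set V × Set V)) : Prop :=
  ∀ K S : Set V, G.IsClique K → Gᶜ.IsClique S → Disjoint K S →
    K ⊆ X → S ⊆ X → ∃ p ∈ F, K ⊆ p.1 ∧ S ⊆ p.2

variable {G}

theorem IsClique.disjoint_or_disjoint {K A B : Set V} (hK : G.IsClique K) (hAB : Disjoint A B)
    (hnonadj : ∀ x ∈ A, ∀ y ∈ B, ¬ G.Adj x y) : Disjoint K A ∨ Disjoint K B := by
  by_contra! h
  obtain ⟨x, hxK, hxA⟩ := Set.not_disjoint_iff.1 h.1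
  obtain ⟨y, hyK, hyB⟩ := Set.not_disjoint_iff.1 h.2
  exact hnonadj x hxA y hyB (hK hxK hyK (hAB.ne_of_mem hxA hyB))

theorem IsCSSeparatorOn.exists_subset_union_of_disjoint {B : Set V} {F : Finset (Set V × Set V)}
    (hF : G.IsCSSeparatorOn Bᶜ F) {K S : Set V} (hK : G.IsClique K) (hS : Gᶜ.IsClique S)
    (hKS : Disjoint K S) (hKB : Disjoint K B) : ∃ p ∈ F, K ⊆ p.1 ∧ S ⊆ p.2 ∪ B := by
  obtain ⟨p, hp, hKp, hSp⟩ := hF K (S \ B) hK (hS.subset Set.sdiff_subset)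
    (hKS.mono_right Set.sdiff_subset) (Set.subset_compl_iff_disjoint_right.2 hKB)
    (Set.sdiff_subset_compl S B)
  exact ⟨p, hp, hKp, Set.union_comm B p.2 ▸ Set.sdiff_subset_iff.1 hSp⟩

end SimpleGraph

theorem cs_separator_glue_general {V : Type*} (G : SimpleGraph V) (V₁ V₂ : Set V)
    (hdisj : Disjoint V₁ V₂)
    (hnonadj : ∀ x ∈ V₁, ∀ y ∈ V₂, ¬ G.Adj x y)
    (V₃ : Set V) (hV₃ : V₃ = (V₁ ∪ V₂)ᶜ)
    (F₁ F₂ : Finset (Set V × Set V))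
    (hF₁cut : ∀ p ∈ F₁, p.1 ∪ p.2 = V₁ ∪ V₃ ∧ Disjoint p.1 p.2)
    (hF₂cut : ∀ p ∈ F₂, p.1 ∪ p.2 = V₂ ∪ V₃ ∧ Disjoint p.1 p.2)
    (hF₁ : ∀ K S : Set V, G.IsClique K → Gᶜ.IsClique S → Disjoint K S →
      K ⊆ V₁ ∪ V₃ → S ⊆ V₁ ∪ V₃ → ∃ p ∈ F₁, K ⊆ p.1 ∧ S ⊆ p.2)
    (hF₂ : ∀ K S : Set V, G.IsClique K → Gᶜ.IsClique S → Disjoint K S →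
      K ⊆ V₂ ∪ V₃ → S ⊆ V₂ ∪ V₃ → ∃ p ∈ F₂, K ⊆ p.1 ∧ S ⊆ p.2)
    (F : Finset (Set V × Set V))
    (hF : ∀ p, p ∈ F ↔ ((∃ q ∈ F₁, p = (q.1, q.2 ∪ V₂)) ∨ (∃ q ∈ F₂, p = (q.1, q.2 ∪ V₁)))) :
    F.card ≤ F₁.card + F₂.card ∧
    (∀ p ∈ F, p.1 ∪ p.2 = Set.univ ∧ Disjoint p.1 p.2) ∧
    ∀ K S : Set V, G.IsClique K → Gᶜ.IsClique S → Disjoint K S →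
      ∃ p ∈ F, K ⊆ p.1 ∧ S ⊆ p.2 := by
  have h13 : V₁ ∪ V₃ = V₂ᶜ := hV₃ ▸ Set.union_compl_union_eq_compl hdisj
  have h23 : V₂ ∪ V₃ = V₁ᶜ := by
    rw [hV₃, Set.union_comm V₁]; exact Set.union_compl_union_eq_compl hdisj.symm
  rw [h13] at hF₁cut hF₁
  rw [h23] at hF₂cut hF₂
  have hFeq : F = F₁.image (fun q => (q.1, q.2 ∪ V₂)) ∪ F₂.image (fun q => (q.1, q.2 ∪ V₁)) := by
    ext p; simp [hF, eq_comm]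
  refine ⟨?_, ?_, ?_⟩
  · rw [hFeq]
    exact (Finset.card_union_le _ _).trans (add_le_add Finset.card_image_le Finset.card_image_le)
  · intro p hp
    rcases (hF p).1 hp with ⟨q, hq, rfl⟩ | ⟨q, hq, rfl⟩
    · exact Set.IsBipartition.union_snd_compl (hF₁cut q hq)
    · exact Set.IsBipartition.union_snd_compl (hF₂cut q hq)
  · intro K S hK hS hKS
    rcases hK.disjoint_or_disjoint hdisj hnonadj with hK₁ | hK₂
    · obtain ⟨q, hq, hKq, hSq⟩ :=
        SimpleGraph.IsCSSeparatorOn.exists_subset_union_of_disjoint hF₂ hK hS hKS hK₁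
      exact ⟨_, (hF _).2 (Or.inr ⟨q, hq, rfl⟩), hKq, hSq⟩
    · obtain ⟨q, hq, hKq, hSq⟩ :=
        SimpleGraph.IsCSSeparatorOn.exists_subset_union_of_disjoint hF₁ hK hS hKS hK₂
      exact ⟨_, (hF _).2 (Or.inl ⟨q, hq, rfl⟩), hKq, hSq⟩

/-- If `V₁, V₂` are disjoint nonempty completely non-adjacent sets, `V₃` the remaining
vertices, and `F₁, F₂` are CS-separators of the subgraphs induced on `V₁ ∪ V₃` and
`V₂ ∪ V₃`, then extending each cut `(U,W)` of `F₁` to `(U, W ∪ V₂)` and each cut of `F₂`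
to `(U, W ∪ V₁)` yields a CS-separator for `G` of size at most `|F₁| + |F₂|`. -/
theorem cs_separator_glue {V : Type*} [Fintype V] (G : SimpleGraph V) (V₁ V₂ : Set V)
    (h1 : V₁.Nonempty) (h2 : V₂.Nonempty) (hdisj : Disjoint V₁ V₂)
    (hnonadj : ∀ x ∈ V₁, ∀ y ∈ V₂, ¬ G.Adj x y)
    (V₃ : Set V) (hV₃ : V₃ = (V₁ ∪ V₂)ᶜ)
    (F₁ F₂ : Finset (Set V × Set V))
    (hF₁cut : ∀ p ∈ F₁, p.1 ∪ p.2 = V₁ ∪ V₃ ∧ Disjoint p.1 p.2)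
    (hF₂cut : ∀ p ∈ F₂, p.1 ∪ p.2 = V₂ ∪ V₃ ∧ Disjoint p.1 p.2)
    (hF₁ : ∀ K S : Set V, G.IsClique K → Gᶜ.IsClique S → Disjoint K S →
      K ⊆ V₁ ∪ V₃ → S ⊆ V₁ ∪ V₃ → ∃ p ∈ F₁, K ⊆ p.1 ∧ S ⊆ p.2)
    (hF₂ : ∀ K S : Set V, G.IsClique K → Gᶜ.IsClique S → Disjoint K S →
      K ⊆ V₂ ∪ V₃ → S ⊆ V₂ ∪ V₃ → ∃ p ∈ F₂, K ⊆ p.1 ∧ S ⊆ p.2)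
    (F : Finset (Set V × Set V))
    (hF : ∀ p, p ∈ F ↔ ((∃ q ∈ F₁, p = (q.1, q.2 ∪ V₂)) ∨ (∃ q ∈ F₂, p = (q.1, q.2 ∪ V₁)))) :
    F.card ≤ F₁.card + F₂.card ∧
    (∀ p ∈ F, p.1 ∪ p.2 = Set.univ ∧ Disjoint p.1 p.2) ∧
    ∀ K S : Set V, G.IsClique K → Gᶜ.IsClique S → Disjoint K S →
      ∃ p ∈ F, K ⊆ p.1 ∧ S ⊆ p.2 :=
  cs_separator_glue_general G V₁ V₂ hdisj hnonadj V₃ hV₃ F₁ F₂ hF₁cut hF₂cut hF₁ hF₂ F hF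
end

section
/- Every graph G on n vertices admits a fooling set of size n + 1, i.e., a family of n+1 pairs (Kᵢ, Sᵢ) of a clique and a disjoint stable set of G such that for all i ≠ j, Kᵢ ∩ Sⱼ ≠ ∅ or Kⱼ ∩ Sᵢ ≠ ∅. -/
/-!
Pick a vertex `v`. Recursively take a fooling family on the neighbourhood of `v` and add `v` to
each of its cliques, and one on the non-neighbourhood of `v` and add `v` to each of its stable
sets. Every pair of the first kind fools every pair of the second kind through `v`, so the two
families together form a fooling family, of size `(a + 1) + (b + 1) = n + 1` where `a + b = n - 1`.
-/

open Finset

namespace SimpleGraph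

variable {V : Type*} {G : SimpleGraph V}

variable (G) in
def IsFoolingPair (p : Set V × Set V) : Prop :=
  G.IsClique p.1 ∧ Gᶜ.IsClique p.2 ∧ Disjoint p.1 p.2

def CrossIntersect (p q : Set V × Set V) : Prop :=
  (p.1 ∩ q.2).Nonempty ∨ (q.1 ∩ p.2).Nonempty

theorem CrossIntersect.symm {p q : Set V × Set V} (h : CrossIntersect p q) : CrossIntersect q p :=
  Or.symm h

theorem CrossIntersect.mono {p q p' q' : Set V × Set V} (h : CrossIntersect p q) (hp : p ≤ p')
    (hq : q ≤ q') : CrossIntersect p' q' :=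
  h.imp (·.mono (Set.inter_subset_inter hp.1 hq.2)) (·.mono (Set.inter_subset_inter hq.1 hp.2))

theorem crossIntersect_insert_insert (v : V) (K S K' S' : Set V) :
    CrossIntersect (insert v K, S) (K', insert v S') :=
  Or.inl ⟨v, Set.mem_insert v K, Set.mem_insert v S'⟩

variable (G) in
def IsFoolingList (s : Set V) (l : List (Set V × Set V)) : Prop :=
  (∀ p ∈ l, G.IsFoolingPair p ∧ p.1 ⊆ s ∧ p.2 ⊆ s) ∧ l.Pairwise CrossIntersect

namespace IsFoolingList

variable {s t : Set V} {l l' : List (Set V × Set V)}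

theorem singleton_empty (s : Set V) : G.IsFoolingList s [(∅, ∅)] := by
  simp [IsFoolingList, IsFoolingPair]

theorem mono (h : G.IsFoolingList s l) (hst : s ⊆ t) : G.IsFoolingList t l :=
  ⟨fun p hp => ⟨(h.1 p hp).1, (h.1 p hp).2.1.trans hst, (h.1 p hp).2.2.trans hst⟩, h.2⟩

theorem append (h : G.IsFoolingList s l) (h' : G.IsFoolingList s l')
    (hcross : ∀ p ∈ l, ∀ q ∈ l', CrossIntersect p q) : G.IsFoolingList s (l ++ l') := by
  refine ⟨fun p hp => ?_, List.pairwise_append.2 ⟨h.2, h'.2, hcross⟩⟩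
  rcases List.mem_append.1 hp with hp | hp
  exacts [h.1 p hp, h'.1 p hp]

theorem map_insert_fst {v : V} (hs : s ⊆ G.neighborSet v) (h : G.IsFoolingList s l) :
    G.IsFoolingList (insert v s) (l.map fun p => (insert v p.1, p.2)) := by
  refine ⟨?_, List.pairwise_map.2 (h.2.imp (·.mono ⟨Set.subset_insert _ _, le_rfl⟩
    ⟨Set.subset_insert _ _, le_rfl⟩))⟩
  simp only [List.mem_map]
  rintro _ ⟨p, hp, rfl⟩
  obtain ⟨⟨hK, hS, hKS⟩, hKs, hSs⟩ := h.1 p hp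
  have hvS : v ∉ p.2 := fun hv => G.irrefl (hs (hSs hv))
  exact ⟨⟨hK.insert fun b hb _ => hs (hKs hb), hS, Set.disjoint_insert_left.2 ⟨hvS, hKS⟩⟩,
    Set.insert_subset_insert hKs, hSs.trans (Set.subset_insert _ _)⟩

theorem map_insert_snd {v : V} (hs : s ⊆ Gᶜ.neighborSet v) (h : G.IsFoolingList s l) :
    G.IsFoolingList (insert v s) (l.map fun p => (p.1, insert v p.2)) := by
  refine ⟨?_, List.pairwise_map.2 (h.2.imp (·.mono ⟨le_rfl, Set.subset_insert _ _⟩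
    ⟨le_rfl, Set.subset_insert _ _⟩))⟩
  simp only [List.mem_map]
  rintro _ ⟨p, hp, rfl⟩
  obtain ⟨⟨hK, hS, hKS⟩, hKs, hSs⟩ := h.1 p hp
  have hvK : v ∉ p.1 := fun hv => Gᶜ.irrefl (hs (hKs hv))
  exact ⟨⟨hK, hS.insert fun b hb _ => hs (hSs hb), Set.disjoint_insert_right.2 ⟨hvK, hKS⟩⟩,
    hKs.trans (Set.subset_insert _ _), Set.insert_subset_insert hSs⟩

end IsFoolingList

theorem exists_isFoolingList (G : SimpleGraph V) (s : Finset V) :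
    ∃ l, l.length = #s + 1 ∧ G.IsFoolingList s l := by
  classical
  induction s using Finset.strongInduction with
  | H s ih =>
  obtain rfl | ⟨v, hv⟩ := s.eq_empty_or_nonempty
  · exact ⟨[(∅, ∅)], rfl, .singleton_empty _⟩
  set A := (s.erase v).filter (G.Adj v)
  set B := (s.erase v).filter (¬G.Adj v ·)
  have hAs : A ⊂ s := (filter_subset _ _).trans_ssubset (erase_ssubset hv)
  have hBs : B ⊂ s := (filter_subset _ _).trans_ssubset (erase_ssubset hv)
  obtain ⟨lA, hlA, hA⟩ := ih A hAs
  obtain ⟨lB, hlB, hB⟩ := ih B hBs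
  have hAv : (A : Set V) ⊆ G.neighborSet v := fun w hw => (mem_filter.1 hw).2
  have hBv : (B : Set V) ⊆ Gᶜ.neighborSet v := fun w hw => by
    obtain ⟨hw, hvw⟩ := mem_filter.1 hw
    exact (compl_adj G v w).2 ⟨(ne_of_mem_erase hw).symm, hvw⟩
  have hcard : #A + #B + 1 = #s := by
    rw [card_filter_add_card_filter_not, card_erase_add_one hv]
  refine ⟨lA.map (fun p => (insert v p.1, p.2)) ++ lB.map (fun p => (p.1, insert v p.2)),
    by simp only [List.length_append, List.length_map, hlA, hlB, ← hcard]; ring, ?_⟩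
  refine ((hA.map_insert_fst hAv).mono ?_).append ((hB.map_insert_snd hBv).mono ?_) ?_
  · exact Set.insert_subset hv (coe_subset.2 hAs.subset)
  · exact Set.insert_subset hv (coe_subset.2 hBs.subset)
  · simp only [List.mem_map]
    rintro _ ⟨p, -, rfl⟩ _ ⟨q, -, rfl⟩
    exact crossIntersect_insert_insert v _ _ _ _

end SimpleGraph

/-- Every graph on `n` vertices admits a fooling set of size `n + 1`: a family of `n+1`
pairs `(Kᵢ, Sᵢ)` of a clique and a disjoint stable set such that for all `i ≠ j`,
`Kᵢ ∩ Sⱼ ≠ ∅` or `Kⱼ ∩ Sᵢ ≠ ∅`. -/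
theorem fooling_set_of_size_n_plus_one {V : Type*} [Fintype V] (G : SimpleGraph V) :
    ∃ P : Fin (Fintype.card V + 1) → Set V × Set V,
      (∀ i, G.IsClique (P i).1 ∧ Gᶜ.IsClique (P i).2 ∧ Disjoint (P i).1 (P i).2) ∧
      ∀ i j, i ≠ j → ((P i).1 ∩ (P j).2).Nonempty ∨ ((P j).1 ∩ (P i).2).Nonempty := by
  obtain ⟨l, hlen, hpairs, hl⟩ := G.exists_isFoolingList Finset.univ
  rw [Finset.card_univ] at hlen
  refine ⟨fun i => l.get (i.cast hlen.symm), fun i => (hpairs _ (List.get_mem _ _)).1,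
    fun i j hij => ?_⟩
  rcases lt_or_gt_of_ne hij with h | h
  exacts [hl.rel_get_of_lt h, (hl.rel_get_of_lt h).symm]
end

section
/- If some graph G on n vertices admits a fooling set of size m, then the complete graph K_m admits an oriented bipartite packing of size at most n, i.e., bp_or(K_m) ≤ n. -/
/-- A packing certificate (oriented bipartite packing) of a graph `H`, indexed by `Fin k`:
pairs of disjoint completely adjacent sets covering every edge in at least one direction and
covering no ordered pair of adjacent vertices twice. -/
def IsPackingCert {W : Type*} (H : SimpleGraph W) {k : ℕ} (P : Fin k → Set W × Set W) : Prop :=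
  (∀ i, Disjoint (P i).1 (P i).2) ∧
  (∀ i, ∀ x ∈ (P i).1, ∀ y ∈ (P i).2, H.Adj x y) ∧
  (∀ x y, H.Adj x y → ∃ i, (x ∈ (P i).1 ∧ y ∈ (P i).2) ∨ (y ∈ (P i).1 ∧ x ∈ (P i).2)) ∧
  (∀ i j, i ≠ j → ∀ x y, H.Adj x y →
    ¬(x ∈ (P i).1 ∧ x ∈ (P j).1 ∧ y ∈ (P i).2 ∧ y ∈ (P j).2))

/-- A fooling set on a graph `G`: pairs of a clique and a disjoint stable set that pairwise
cross-intersect. -/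
def IsFoolingSet {V : Type*} (G : SimpleGraph V) {m : ℕ} (f : Fin m → Set V × Set V) : Prop :=
  (∀ i, G.IsClique (f i).1 ∧ Gᶜ.IsClique (f i).2 ∧ Disjoint (f i).1 (f i).2) ∧
  ∀ i j, i ≠ j → ((f i).1 ∩ (f j).2).Nonempty ∨ ((f j).1 ∩ (f i).2).Nonempty

/-!
Each vertex `v` of `G` yields the pair of index sets `{i | v ∈ Kᵢ}` and `{i | v ∈ Sᵢ}`.
Cross-intersection of the fooling set makes these pairs cover every edge of `K_m`, and since a
clique and a stable set share at most one vertex, no ordered edge is covered by two vertices.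
-/

theorem SimpleGraph.IsClique.subsingleton_inter_of_isClique_compl {V : Type*}
    {G : SimpleGraph V} {K S : Set V} (hK : G.IsClique K) (hS : Gᶜ.IsClique S) :
    (K ∩ S).Subsingleton := by
  rintro v ⟨hvK, hvS⟩ w ⟨hwK, hwS⟩
  by_contra hne
  exact (hS hvS hwS hne).2 (hK hvK hwK hne)

def IsFoolingSet.packing {V : Type*} {m k : ℕ} (f : Fin m → Set V × Set V) (e : Fin k ≃ V) :
    Fin k → Set (Fin m) × Set (Fin m) :=
  fun l => ({i | e l ∈ (f i).1}, {i | e l ∈ (f i).2})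

theorem IsFoolingSet.isPackingCert_packing {V : Type*} {G : SimpleGraph V} {m k : ℕ}
    {f : Fin m → Set V × Set V} (hf : IsFoolingSet G f) (e : Fin k ≃ V) :
    IsPackingCert (⊤ : SimpleGraph (Fin m)) (IsFoolingSet.packing f e) := by
  obtain ⟨hpair, hcross⟩ := hf
  have hdisj : ∀ l, Disjoint (packing f e l).1 (packing f e l).2 := fun l =>
    Set.disjoint_left.2 fun i hK hS => (hpair i).2.2.le_bot ⟨hK, hS⟩
  refine ⟨hdisj, fun l i hi j hj => ?_, fun i j hij => ?_, ?_⟩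
  · rintro rfl
    exact Set.disjoint_left.1 (hdisj l) hi hj
  · rcases hcross i j hij with ⟨v, hvK, hvS⟩ | ⟨v, hvK, hvS⟩
    · exact ⟨e.symm v, .inl ⟨by simpa [packing] using hvK, by simpa [packing] using hvS⟩⟩
    · exact ⟨e.symm v, .inr ⟨by simpa [packing] using hvK, by simpa [packing] using hvS⟩⟩
  · rintro l l' hll' x y - ⟨hxl, hxl', hyl, hyl'⟩
    exact hll' (e.injective <| ((hpair x).1.subsingleton_inter_of_isClique_compl (hpair y).2.1)
      ⟨hxl, hyl⟩ ⟨hxl', hyl'⟩)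

/-- If some graph on `n` vertices admits a fooling set of size `m`, then `bp_or(K_m) ≤ n`. -/
theorem bpor_complete_le_of_fooling_set {V : Type*} [Fintype V] {n m : ℕ}
    (hn : Fintype.card V = n) (G : SimpleGraph V)
    (f : Fin m → Set V × Set V) (hf : IsFoolingSet G f) :
    ∃ P : Fin n → Set (Fin m) × Set (Fin m),
      IsPackingCert (⊤ : SimpleGraph (Fin m)) P :=
  ⟨_, hf.isPackingCert_packing (Fintype.equivFinOfCardEq hn).symm⟩
end

section
/- If the complete graph K_m admits an oriented bipartite packing of size n, then there exists a graph G on n vertices admitting a fooling set of size m. -/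
/-!
Take the parts of the packing as vertices, two of them adjacent when their source sides `Aᵢ`
meet, and send each vertex `x` of `K_m` to the pair `({i | x ∈ Aᵢ}, {i | x ∈ Bᵢ})`. The first set
is a clique by construction. The second is stable: if `x ∈ Bᵢ ∩ Bⱼ` and some `y ∈ Aᵢ ∩ Aⱼ`, the
ordered pair `(y, x)` would be covered twice. Finally, the edge `xy` is covered in some orientation
by some part `i`, which puts `i` in the clique of one endpoint and the stable set of the other.
-/

variable {W : Type*} {k : ℕ}

def sourceMeetGraph (P : Fin k → Set W × Set W) : SimpleGraph (Fin k) :=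
  SimpleGraph.fromRel fun i j => ((P i).1 ∩ (P j).1).Nonempty

def sourceIndices (P : Fin k → Set W × Set W) (x : W) : Set (Fin k) := {i | x ∈ (P i).1}

def targetIndices (P : Fin k → Set W × Set W) (x : W) : Set (Fin k) := {i | x ∈ (P i).2}

variable {P : Fin k → Set W × Set W}

theorem sourceMeetGraph_adj {i j : Fin k} :
    (sourceMeetGraph P).Adj i j ↔ i ≠ j ∧ ((P i).1 ∩ (P j).1).Nonempty := by
  simp [sourceMeetGraph, Set.inter_comm]

theorem isClique_sourceIndices (x : W) : (sourceMeetGraph P).IsClique (sourceIndices P x) :=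
  fun _ hi _ hj hij => sourceMeetGraph_adj.2 ⟨hij, x, hi, hj⟩

namespace IsPackingCert

variable {H : SimpleGraph W}

theorem isClique_compl_targetIndices (hP : IsPackingCert H P) (x : W) :
    (sourceMeetGraph P)ᶜ.IsClique (targetIndices P x) := by
  obtain ⟨-, hedge, -, hunique⟩ := hP
  intro i hi j hj hij
  refine ⟨hij, fun hadj => ?_⟩
  obtain ⟨-, y, hyi, hyj⟩ := sourceMeetGraph_adj.1 hadj
  exact hunique i j hij y x (hedge i y hyi x hi) ⟨hyi, hyj, hi, hj⟩

theorem disjoint_sourceIndices_targetIndices (hP : IsPackingCert H P) (x : W) :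
    Disjoint (sourceIndices P x) (targetIndices P x) :=
  Set.disjoint_left.2 fun i hs ht => (hP.1 i).ne_of_mem hs ht rfl

theorem sourceIndices_inter_targetIndices_nonempty_of_adj (hP : IsPackingCert H P) {x y : W}
    (hxy : H.Adj x y) :
    (sourceIndices P x ∩ targetIndices P y).Nonempty ∨
      (sourceIndices P y ∩ targetIndices P x).Nonempty := by
  obtain ⟨i, hi | hi⟩ := hP.2.2.1 x y hxy
  · exact Or.inl ⟨i, hi⟩
  · exact Or.inr ⟨i, hi⟩

theorem isFoolingSet_sourceMeetGraph {m : ℕ} {P : Fin k → Set (Fin m) × Set (Fin m)}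
    (hP : IsPackingCert ⊤ P) :
    IsFoolingSet (sourceMeetGraph P) fun x => (sourceIndices P x, targetIndices P x) :=
  ⟨fun x => ⟨isClique_sourceIndices x, hP.isClique_compl_targetIndices x,
      hP.disjoint_sourceIndices_targetIndices x⟩,
    fun _ _ hxy => hP.sourceIndices_inter_targetIndices_nonempty_of_adj hxy⟩

end IsPackingCert

/-- If `K_m` admits an oriented bipartite packing of size `n`, then some graph on `n`
vertices admits a fooling set of size `m`. -/
theorem fooling_set_of_bpor_complete {n m : ℕ} (P : Fin n → Set (Fin m) × Set (Fin m))
    (hP : IsPackingCert (⊤ : SimpleGraph (Fin m)) P) :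
    ∃ (G : SimpleGraph (Fin n)) (f : Fin m → Set (Fin n) × Set (Fin n)),
      IsFoolingSet G f :=
  ⟨_, _, hP.isFoolingSet_sourceMeetGraph⟩
end

section
/- If there is a polynomial P such that every graph H satisfies χ(H) ≤ P(bp_or(H)), then there is a polynomial Q such that every graph G on n vertices admits a CS-separator of size Q(n). Concretely: given G on n vertices, the auxiliary graph H whose vertices are the disjoint clique–stable-set pairs of G, with (K,S) adjacent to (K',S') whenever S ∩ K' ≠ ∅ or S' ∩ K ≠ ∅, satisfies bp_or(H) ≤ n, and each color class of a proper coloring of H yields a single cut of G separating all pairs in that class. -/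
/-!
Encode the separation problem of `G` in the graph `H` on disjoint clique–stable-set pairs
`(K, S)`, two pairs being adjacent when the stable set of one meets the clique of the other.
Each vertex `v` of `G` contributes the block `({(K, S) | v ∈ S}, {(K, S) | v ∈ K})`; two blocks
cannot cover the same directed pair, since `v ≠ w` would then be both an edge and a non-edge.
So `bp_or(H) ≤ n` and `H` is `P(n)`-colourable. Within one colour class no clique meets a
stable set, so the union of the cliques of that class separates every pair in it.
-/

structure CSPair {V : Type*} (G : SimpleGraph V) where
  clique : Set V
  stable : Set V
  isClique : G.IsClique clique
  isStable : Gᶜ.IsClique stable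
  disjoint : Disjoint clique stable

namespace CSPair

variable {V : Type*} {G : SimpleGraph V}

instance [Finite V] : Finite (CSPair G) :=
  Finite.of_injective (fun p : CSPair G => (p.clique, p.stable)) <| by
    rintro ⟨K, S, _, _, _⟩ ⟨K', S', _, _, _⟩ h
    cases h
    rfl

noncomputable instance [Finite V] : Fintype (CSPair G) := Fintype.ofFinite _

end CSPair

section

variable {V : Type*} (G : SimpleGraph V)

def IsCSSeparator (F : Set (Set V)) : Prop :=
  ∀ K S : Set V, G.IsClique K → Gᶜ.IsClique S → Disjoint K S → ∃ A ∈ F, K ⊆ A ∧ S ⊆ Aᶜ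

def csGraph : SimpleGraph (CSPair G) where
  Adj p q := (p.stable ∩ q.clique).Nonempty ∨ (q.stable ∩ p.clique).Nonempty
  symm := ⟨fun _ _ => Or.symm⟩
  loopless := ⟨fun p => by
    rintro (⟨v, hS, hK⟩ | ⟨v, hS, hK⟩) <;> exact Set.disjoint_left.mp p.disjoint hK hS⟩

variable {G} in
theorem csGraph_adj {p q : CSPair G} :
    (csGraph G).Adj p q ↔ (p.stable ∩ q.clique).Nonempty ∨ (q.stable ∩ p.clique).Nonempty :=
  Iff.rfl

def csPacking {k : ℕ} (e : Fin k ≃ V) : Fin k → Set (CSPair G) × Set (CSPair G) :=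
  fun i => ({p | e i ∈ p.stable}, {p | e i ∈ p.clique})

theorem isPackingCert_csPacking {k : ℕ} (e : Fin k ≃ V) :
    IsPackingCert (csGraph G) (csPacking G e) := by
  refine ⟨fun i => ?_, fun i p hp q hq => csGraph_adj.2 (Or.inl ⟨e i, hp, hq⟩), ?_, ?_⟩
  · exact Set.disjoint_left.mpr fun p hS hK => Set.disjoint_left.mp p.disjoint hK hS
  · rintro p q hpq
    rcases csGraph_adj.1 hpq with ⟨v, hS, hK⟩ | ⟨v, hS, hK⟩
    · exact ⟨e.symm v, Or.inl ⟨by simpa [csPacking] using hS, by simpa [csPacking] using hK⟩⟩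
    · exact ⟨e.symm v, Or.inr ⟨by simpa [csPacking] using hS, by simpa [csPacking] using hK⟩⟩
  · rintro i j hij p q - ⟨hpi, hpj, hqi, hqj⟩
    have hne : e i ≠ e j := e.injective.ne hij
    exact (p.isStable hpi hpj hne).2 (q.isClique hqi hqj hne)

end

namespace SimpleGraph.Coloring

variable {V α : Type*} {G : SimpleGraph V} (C : (csGraph G).Coloring α)

def cliqueUnion (c : α) : Set V :=
  {v | ∃ p, C p = c ∧ v ∈ p.clique}

theorem clique_subset_cliqueUnion (p : CSPair G) : p.clique ⊆ C.cliqueUnion (C p) :=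
  fun _ hv => ⟨p, rfl, hv⟩

/-- A clique meeting the stable set of `p` belongs to a neighbour of `p`, or to `p` itself. -/
theorem stable_subset_compl_cliqueUnion (p : CSPair G) : p.stable ⊆ (C.cliqueUnion (C p))ᶜ := by
  rintro v hS ⟨q, hq, hK⟩
  by_cases hpq : p = q
  · subst hpq
    exact Set.disjoint_left.mp p.disjoint hK hS
  · exact C.valid (csGraph_adj.2 (Or.inl ⟨v, hS, hK⟩)) hq.symm

theorem isCSSeparator_range_cliqueUnion : IsCSSeparator G (Set.range C.cliqueUnion) :=
  fun K S hK hS hKS =>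
    let p : CSPair G := ⟨K, S, hK, hS, hKS⟩
    ⟨C.cliqueUnion (C p), Set.mem_range_self _, C.clique_subset_cliqueUnion p,
      C.stable_subset_compl_cliqueUnion p⟩

end SimpleGraph.Coloring

theorem exists_isCSSeparator_card_le_of_colorable {V : Type*} {G : SimpleGraph V} {m : ℕ}
    (h : (csGraph G).Colorable m) :
    ∃ F : Finset (Set V), F.card ≤ m ∧ IsCSSeparator G F := by
  classical
  obtain ⟨C⟩ := h
  refine ⟨Finset.univ.image C.cliqueUnion, Finset.card_image_le.trans_eq (Finset.card_fin m), ?_⟩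
  rw [Finset.coe_image, Finset.coe_univ, Set.image_univ]
  exact C.isCSSeparator_range_cliqueUnion

/-- If there is a polynomial `P` with `χ(H) ≤ P(bp_or(H))` for every finite graph `H`, then
there is a polynomial `Q` such that every graph on `n` vertices has a CS-separator of size
at most `Q(n)`. -/
theorem cs_separation_of_oriented_alon_saks_seymour (P : Polynomial ℕ)
    (hP : ∀ (W : Type) [Fintype W] (H : SimpleGraph W) (k : ℕ)
      (Pk : Fin k → Set W × Set W), IsPackingCert H Pk → H.Colorable (P.eval k)) :
    ∃ Q : Polynomial ℕ, ∀ (V : Type) [Fintype V] (G : SimpleGraph V),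
      ∃ F : Finset (Set V), F.card ≤ Q.eval (Fintype.card V) ∧
        ∀ K S : Set V, G.IsClique K → Gᶜ.IsClique S → Disjoint K S →
          ∃ A ∈ F, K ⊆ A ∧ S ⊆ Aᶜ :=
  ⟨P, fun V _ G => exists_isCSSeparator_card_le_of_colorable <|
    hP _ (csGraph G) _ _ (isPackingCert_csPacking G (Fintype.equivFin V).symm)⟩
end

section
/- If there is a polynomial Q such that every graph on n vertices admits a CS-separator of size Q(n), then every graph G satisfies χ(G) ≤ Q(bp_or(G)). Concretely: from an oriented bipartite packing (A₁,B₁),…,(A_k,B_k) of G, build the auxiliary graph H on vertex set {1,…,k} with an edge between i and j whenever Aᵢ ∩ Aⱼ ≠ ∅; then for every vertex x of G, K_x = {i : x ∈ Aᵢ} is a clique of H and S_x = {i : x ∈ Bᵢ} is a stable set of H, and coloring each x by the index of a cut of H separating (K_x, S_x) yields a proper coloring of G. -/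
namespace SimpleGraph

variable {ι V α : Type*}

def intersectionGraph (A : ι → Set V) : SimpleGraph ι :=
  fromRel fun i j => ¬Disjoint (A i) (A j)

theorem isClique_intersectionGraph_setOf_mem (A : ι → Set V) (x : V) :
    (intersectionGraph A).IsClique {i | x ∈ A i} := fun i hi j hj hij =>
  (fromRel_adj _ i j).2 ⟨hij, .inl (Set.not_disjoint_iff.2 ⟨x, hi, hj⟩)⟩

theorem colorable_card_of_forall_mem {G : SimpleGraph V} {F : Finset α} {f : V → α}
    (hfF : ∀ x, f x ∈ F) (hf : ∀ ⦃x y⦄, G.Adj x y → f x ≠ f y) : G.Colorable F.card := by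
  let C : G.Coloring F :=
    Coloring.mk (fun x => ⟨f x, hfF x⟩) fun h hxy => hf h (congrArg Subtype.val hxy)
  simpa only [Fintype.card_coe] using C.colorable

end SimpleGraph

namespace IsPackingCert

open SimpleGraph

variable {V : Type*} {G : SimpleGraph V} {k : ℕ} {P : Fin k → Set V × Set V}

theorem isClique_compl_intersectionGraph_setOf_mem_snd (hP : IsPackingCert G P) (x : V) :
    (intersectionGraph fun i => (P i).1)ᶜ.IsClique {i | x ∈ (P i).2} := by
  obtain ⟨-, hcomplete, -, hunique⟩ := hP
  intro i hi j hj hij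
  refine (compl_adj _ i j).2 ⟨hij, fun hadj => ?_⟩
  obtain ⟨-, hmeet⟩ := (fromRel_adj _ i j).1 hadj
  obtain ⟨z, hzi, hzj⟩ := Set.not_disjoint_iff.1 (hmeet.elim id fun h hd => h hd.symm)
  exact hunique i j hij z x (hcomplete i z hzi x hi) ⟨hzi, hzj, hi, hj⟩

theorem disjoint_setOf_mem_fst_setOf_mem_snd (hP : IsPackingCert G P) (x : V) :
    Disjoint {i | x ∈ (P i).1} {i | x ∈ (P i).2} :=
  Set.disjoint_left.2 fun i hA hB => Set.disjoint_left.1 (hP.1 i) hA hB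

theorem ne_of_adj_of_separates (hP : IsPackingCert G P) {f : V → Set (Fin k)}
    (hfA : ∀ x, {i | x ∈ (P i).1} ⊆ f x) (hfB : ∀ x, {i | x ∈ (P i).2} ⊆ (f x)ᶜ)
    {x y : V} (hxy : G.Adj x y) : f x ≠ f y := by
  obtain ⟨i, ⟨hx, hy⟩ | ⟨hy, hx⟩⟩ := hP.2.2.1 x y hxy
  · exact fun h => hfB y hy (h ▸ hfA x hx)
  · exact fun h => hfB x hx (h ▸ hfA y hy)

end IsPackingCert

/-- If there is a polynomial `Q` such that every graph on `n` vertices admits a CS-separator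
of size at most `Q(n)`, then every graph `G` with an oriented bipartite packing of size `k`
is properly colorable with `Q(k)` colors, i.e. `χ(G) ≤ Q(bp_or(G))`. -/
theorem oriented_alon_saks_seymour_of_cs_separation (Q : Polynomial ℕ)
    (hQ : ∀ (V : Type) [Fintype V] (G : SimpleGraph V),
      ∃ F : Finset (Set V), F.card ≤ Q.eval (Fintype.card V) ∧
        ∀ K S : Set V, G.IsClique K → Gᶜ.IsClique S → Disjoint K S →
          ∃ A ∈ F, K ⊆ A ∧ S ⊆ Aᶜ) :
    ∀ (V : Type) [Fintype V] (G : SimpleGraph V) (k : ℕ)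
      (Pk : Fin k → Set V × Set V), IsPackingCert G Pk → G.Colorable (Q.eval k) := by
  intro V _ G k Pk hP
  obtain ⟨F, hFcard, hF⟩ := hQ (Fin k) (SimpleGraph.intersectionGraph fun i => (Pk i).1)
  choose f hfF hfA hfB using fun x =>
    hF _ _ (SimpleGraph.isClique_intersectionGraph_setOf_mem _ x)
      (hP.isClique_compl_intersectionGraph_setOf_mem_snd x)
      (hP.disjoint_setOf_mem_fst_setOf_mem_snd x)
  rw [Fintype.card_fin] at hFcard
  exact (SimpleGraph.colorable_card_of_forall_mem hfF fun _ _ =>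
    hP.ne_of_adj_of_separates hfA hfB).mono hFcard
end

section
/- Let G be a graph with a t-biclique covering B₁,…,B_k (each Bᵢ a complete bipartite subgraph with parts Bᵢ⁻, Bᵢ⁺), and let H be the graph on V(G) whose edges are exactly the edges of G covered exactly t times. Then bp₁(H) ≤ (2k)^t; that is, the edges of H can be partitioned into at most (2k)^t complete bipartite graphs. -/
/-!
Label an edge `xy` of `H` by the `t` bicliques covering it, listed in increasing order, each
together with the side of it containing `x`. Reading the edge as `yx` instead flips every
orientation, so exactly one of the two readings has first orientation `true`; that reading is
the canonical label of the edge. For a label `ℓ`, the vertices lying on the prescribed side of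
every listed biclique and those lying on the opposite sides span a complete bipartite graph.
Each of its edges is covered by the `t` listed bicliques, hence by exactly `t` of them, so it
lies in `H`, and its canonical label is `ℓ`. The `(2k)^t` labels thus partition `E(H)`.
-/

/-- The number of bicliques of the family `B` covering the pair `{x, y}` (in either
orientation). -/
noncomputable def coverCount {V : Type*} {k : ℕ} (B : Fin k → Set V × Set V) (x y : V) : ℕ :=
  {i : Fin k | (x ∈ (B i).1 ∧ y ∈ (B i).2) ∨ (y ∈ (B i).1 ∧ x ∈ (B i).2)}.ncard

/-- A `t`-biclique covering of `G` of size `k`. -/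
def IsBicliqueCover {V : Type*} (G : SimpleGraph V) (t : ℕ) {k : ℕ}
    (B : Fin k → Set V × Set V) : Prop :=
  (∀ i, Disjoint (B i).1 (B i).2) ∧
  (∀ i, ∀ x ∈ (B i).1, ∀ y ∈ (B i).2, G.Adj x y) ∧
  (∀ x y, G.Adj x y → 1 ≤ coverCount B x y ∧ coverCount B x y ≤ t)

/-- The `t`-biclique covering number `bp_t(G)`. -/
noncomputable def bp {V : Type*} (G : SimpleGraph V) (t : ℕ) : ℕ :=
  sInf {k : ℕ | ∃ B : Fin k → Set V × Set V, IsBicliqueCover G t B}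

section

variable {V : Type*}

def Covers (p : Set V × Set V) (x y : V) : Prop :=
  x ∈ p.1 ∧ y ∈ p.2 ∨ y ∈ p.1 ∧ x ∈ p.2

section Covers

variable {p : Set V × Set V} {x y : V}

lemma covers_comm : Covers p x y ↔ Covers p y x := or_comm

lemma Covers.adj {G : SimpleGraph V} (hp : ∀ x ∈ p.1, ∀ y ∈ p.2, G.Adj x y)
    (h : Covers p x y) : G.Adj x y :=
  h.elim (fun h => hp _ h.1 _ h.2) (fun h => (hp _ h.1 _ h.2).symm)

lemma coverCount_eq {k : ℕ} (B : Fin k → Set V × Set V) (x y : V) :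
    coverCount B x y = {i | Covers (B i) x y}.ncard := rfl

lemma coverCount_comm {k : ℕ} (B : Fin k → Set V × Set V) (x y : V) :
    coverCount B x y = coverCount B y x := by
  simp only [coverCount_eq, covers_comm]

def orient (p : Set V × Set V) : Bool → Set V × Set V
  | true => p
  | false => p.swap

lemma orient_not (p : Set V × Set V) (b : Bool) : orient p (!b) = (orient p b).swap := by
  cases b <;> rfl

lemma covers_iff_exists_orient :
    Covers p x y ↔ ∃ b, x ∈ (orient p b).1 ∧ y ∈ (orient p b).2 := by
  constructor
  · rintro (h | h)
    exacts [⟨true, h⟩, ⟨false, h.symm⟩]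
  · rintro ⟨_ | _, h⟩
    exacts [Or.inr h.symm, Or.inl h]

lemma eq_of_mem_orient (hp : Disjoint p.1 p.2) {b b' : Bool} (h : x ∈ (orient p b).1)
    (h' : x ∈ (orient p b').1) : b = b' := by
  cases b <;> cases b'
  all_goals first
    | rfl
    | exact absurd h (Set.disjoint_left.1 hp h')
    | exact absurd h' (Set.disjoint_left.1 hp h)

end Covers

theorem bp_le_card {ι : Type*} [Fintype ι] {G : SimpleGraph V} {t : ℕ}
    (C : ι → Set V × Set V) (hdisj : ∀ a, Disjoint (C a).1 (C a).2)
    (hadj : ∀ a, ∀ x ∈ (C a).1, ∀ y ∈ (C a).2, G.Adj x y)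
    (hcount : ∀ x y, G.Adj x y →
      1 ≤ {a | Covers (C a) x y}.ncard ∧ {a | Covers (C a) x y}.ncard ≤ t) :
    bp G t ≤ Fintype.card ι := by
  let e := (Fintype.equivFin ι).symm
  have hcc : ∀ x y, coverCount (C ∘ e) x y = {a | Covers (C a) x y}.ncard := fun x y =>
    Set.ncard_preimage_of_injective_subset_range (s := {a | Covers (C a) x y}) e.injective
      (by simp)
  exact Nat.sInf_le ⟨C ∘ e, fun _ => hdisj _, fun _ => hadj _,
    fun x y h => hcc x y ▸ hcount x y h⟩

section Label

/-- A label lists `t` bicliques `B (ℓ j).1` together with orientations `(ℓ j).2`. -/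
abbrev Label (k t : ℕ) := Fin t → Fin k × Bool

variable {k t : ℕ} (B : Fin k → Set V × Set V) {ℓ ℓ' : Label k t} {x y : V}

def labelSides (ℓ : Label k t) : Set V × Set V :=
  (⋂ j, (orient (B (ℓ j).1) (ℓ j).2).1, ⋂ j, (orient (B (ℓ j).1) (ℓ j).2).2)

def flipLabel (ℓ : Label k t) : Label k t :=
  fun j => ((ℓ j).1, !(ℓ j).2)

/-- The condition `0 < t` excludes the empty label, whose sides would both be `univ`. -/
def IsCanonical (ℓ : Label k t) : Prop :=
  StrictMono (fun j => (ℓ j).1) ∧ ∃ h : 0 < t, (ℓ ⟨0, h⟩).2 = true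

open Classical in
noncomputable def labelBiclique (ℓ : Label k t) : Set V × Set V :=
  if IsCanonical ℓ then labelSides B ℓ else (∅, ∅)

variable {B}

lemma labelSides_flipLabel : labelSides B (flipLabel ℓ) = (labelSides B ℓ).swap := by
  simp only [labelSides, flipLabel, orient_not, Prod.fst_swap, Prod.snd_swap, Prod.swap_prod_mk]

lemma covers_of_mem_labelSides (hx : x ∈ (labelSides B ℓ).1) (hy : y ∈ (labelSides B ℓ).2)
    (j : Fin t) : Covers (B (ℓ j).1) x y :=
  covers_iff_exists_orient.2 ⟨_, Set.mem_iInter.1 hx j, Set.mem_iInter.1 hy j⟩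

lemma range_eq_of_mem_labelSides (hc : coverCount B x y = t) (hℓ : StrictMono fun j => (ℓ j).1)
    (hx : x ∈ (labelSides B ℓ).1) (hy : y ∈ (labelSides B ℓ).2) :
    Set.range (fun j => (ℓ j).1) = {i | Covers (B i) x y} :=
  Set.eq_of_subset_of_ncard_le (Set.range_subset_iff.2 (covers_of_mem_labelSides hx hy))
    (by rw [Set.ncard_range_of_injective hℓ.injective, ← coverCount_eq, hc, Nat.card_fin])

lemma le_coverCount_of_mem_labelSides (hℓ : StrictMono fun j => (ℓ j).1)
    (hx : x ∈ (labelSides B ℓ).1) (hy : y ∈ (labelSides B ℓ).2) : t ≤ coverCount B x y :=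
  calc t = (Set.range fun j => (ℓ j).1).ncard := by
        rw [Set.ncard_range_of_injective hℓ.injective, Nat.card_fin]
    _ ≤ coverCount B x y :=
        Set.ncard_le_ncard (Set.range_subset_iff.2 (covers_of_mem_labelSides hx hy))

lemma exists_label_mem_labelSides (hc : coverCount B x y = t) :
    ∃ ℓ : Label k t, StrictMono (fun j => (ℓ j).1) ∧
      x ∈ (labelSides B ℓ).1 ∧ y ∈ (labelSides B ℓ).2 := by
  classical
  let S := Finset.univ.filter fun i => Covers (B i) x y
  have hS : S.card = t := by
    rw [← hc, coverCount_eq, ← Set.ncard_coe_finset, Finset.coe_filter]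
    simp only [Finset.mem_univ, true_and]
  have hcov : ∀ j, Covers (B (S.orderEmbOfFin hS j)) x y := fun j =>
    (Finset.mem_filter.1 (S.orderEmbOfFin_mem hS j)).2
  choose b hb using fun j => covers_iff_exists_orient.1 (hcov j)
  exact ⟨fun j => (S.orderEmbOfFin hS j, b j), (S.orderEmbOfFin hS).strictMono,
    Set.mem_iInter.2 fun j => (hb j).1, Set.mem_iInter.2 fun j => (hb j).2⟩

lemma exists_isCanonical_covers (ht : 0 < t) (hc : coverCount B x y = t) :
    ∃ ℓ : Label k t, IsCanonical ℓ ∧ Covers (labelSides B ℓ) x y := by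
  obtain ⟨ℓ, hmono, hx, hy⟩ := exists_label_mem_labelSides hc
  cases h : (ℓ ⟨0, ht⟩).2
  · refine ⟨flipLabel ℓ, ⟨hmono, ht, by simp [flipLabel, h]⟩, Or.inr ?_⟩
    rw [labelSides_flipLabel]
    exact ⟨hy, hx⟩
  · exact ⟨ℓ, ⟨hmono, ht, h⟩, Or.inl ⟨hx, hy⟩⟩

/-- The bicliques of a label realizing an edge are its covering bicliques in increasing order,
and disjointness pins down their orientations. -/
lemma eq_of_mem_labelSides (hdisj : ∀ i, Disjoint (B i).1 (B i).2)
    (hc : coverCount B x y = t) (hℓ : StrictMono fun j => (ℓ j).1)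
    (hℓ' : StrictMono fun j => (ℓ' j).1) (hx : x ∈ (labelSides B ℓ).1)
    (hy : y ∈ (labelSides B ℓ).2) (hx' : x ∈ (labelSides B ℓ').1)
    (hy' : y ∈ (labelSides B ℓ').2) : ℓ = ℓ' := by
  have hidx : (fun j => (ℓ j).1) = fun j => (ℓ' j).1 :=
    (hℓ.range_inj hℓ').1 <| (range_eq_of_mem_labelSides hc hℓ hx hy).trans
      (range_eq_of_mem_labelSides hc hℓ' hx' hy').symm
  funext j
  have hj := congrFun hidx j
  refine Prod.ext hj (eq_of_mem_orient (hdisj _) (Set.mem_iInter.1 hx j) ?_)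
  rw [hj]
  exact Set.mem_iInter.1 hx' j

lemma IsCanonical.eq_of_covers (hdisj : ∀ i, Disjoint (B i).1 (B i).2)
    (hc : coverCount B x y = t) (hℓ : IsCanonical ℓ) (hℓ' : IsCanonical ℓ')
    (h : Covers (labelSides B ℓ) x y) (h' : Covers (labelSides B ℓ') x y) : ℓ = ℓ' := by
  wlog hxy : x ∈ (labelSides B ℓ).1 ∧ y ∈ (labelSides B ℓ).2 generalizing x y
  · exact this ((coverCount_comm B y x).trans hc) (covers_comm.1 h) (covers_comm.1 h')
      (h.resolve_left hxy)
  rcases h' with h' | h'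
  · exact eq_of_mem_labelSides hdisj hc hℓ.1 hℓ'.1 hxy.1 hxy.2 h'.1 h'.2
  · have hflip : ℓ = flipLabel ℓ' := by
      refine eq_of_mem_labelSides hdisj hc hℓ.1 hℓ'.1 hxy.1 hxy.2 ?_ ?_ <;>
        simp only [labelSides_flipLabel, Prod.fst_swap, Prod.snd_swap, h'.1, h'.2]
    obtain ⟨-, _, h0⟩ := hℓ
    obtain ⟨-, _, h0'⟩ := hℓ'
    simp [hflip, flipLabel, h0'] at h0

lemma covers_labelBiclique_iff :
    Covers (labelBiclique B ℓ) x y ↔ IsCanonical ℓ ∧ Covers (labelSides B ℓ) x y := by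
  unfold labelBiclique
  split_ifs with h <;> simp [h, Covers]

lemma existsUnique_covers_labelBiclique (hdisj : ∀ i, Disjoint (B i).1 (B i).2) (ht : 0 < t)
    (hc : coverCount B x y = t) : ∃! ℓ : Label k t, Covers (labelBiclique B ℓ) x y := by
  obtain ⟨ℓ, hℓ, hcov⟩ := exists_isCanonical_covers ht hc
  refine ⟨ℓ, covers_labelBiclique_iff.2 ⟨hℓ, hcov⟩, fun ℓ' h' => ?_⟩
  obtain ⟨hℓ', hcov'⟩ := covers_labelBiclique_iff.1 h'
  exact hℓ'.eq_of_covers hdisj hc hℓ hcov' hcov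

lemma IsBicliqueCover.adj_of_mem_labelBiclique {G H : SimpleGraph V}
    (hB : IsBicliqueCover G t B)
    (hH : ∀ x y, H.Adj x y ↔ (G.Adj x y ∧ coverCount B x y = t))
    (hx : x ∈ (labelBiclique B ℓ).1) (hy : y ∈ (labelBiclique B ℓ).2) : H.Adj x y := by
  unfold labelBiclique at hx hy
  split_ifs at hx hy with hℓ
  · obtain ⟨hmono, ht, -⟩ := hℓ
    have hG : G.Adj x y := (covers_of_mem_labelSides hx hy ⟨0, ht⟩).adj (hB.2.1 _)
    exact (hH x y).2
      ⟨hG, le_antisymm (hB.2.2 x y hG).2 (le_coverCount_of_mem_labelSides hmono hx hy)⟩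
  · exact hx.elim

end Label

end

theorem bp_one_of_exactly_t_covered_edges_general {V : Type*} (G : SimpleGraph V)
    (t k : ℕ) (B : Fin k → Set V × Set V) (hB : IsBicliqueCover G t B)
    (H : SimpleGraph V)
    (hH : ∀ x y, H.Adj x y ↔ (G.Adj x y ∧ coverCount B x y = t)) :
    bp H 1 ≤ (2 * k) ^ t := by
  have hadj : ∀ ℓ, ∀ x ∈ (labelBiclique B ℓ).1, ∀ y ∈ (labelBiclique B ℓ).2, H.Adj x y :=
    fun _ _ hx _ hy => hB.adj_of_mem_labelBiclique hH hx hy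
  have hunique :
      ∀ x y, H.Adj x y → {ℓ : Label k t | Covers (labelBiclique B ℓ) x y}.ncard = 1 := by
    intro x y hxy
    obtain ⟨hG, hc⟩ := (hH x y).1 hxy
    obtain ⟨ℓ, hℓ, huniq⟩ :=
      existsUnique_covers_labelBiclique hB.1 (hc ▸ (hB.2.2 x y hG).1) hc
    exact Set.ncard_eq_one.2 ⟨ℓ, Set.eq_singleton_iff_unique_mem.2 ⟨hℓ, huniq⟩⟩
  calc bp H 1 ≤ Fintype.card (Label k t) :=
        bp_le_card (labelBiclique B)
          (fun ℓ => Set.disjoint_left.2 fun z hz hz' => H.irrefl (hadj ℓ z hz z hz')) hadj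
          (fun x y hxy => (hunique x y hxy).symm ▸ ⟨le_rfl, le_rfl⟩)
    _ = (2 * k) ^ t := by simp [mul_comm]

/-- If `B₁, …, B_k` is a `t`-biclique covering of `G` and `H` is the graph whose edges are
exactly the edges of `G` covered exactly `t` times, then `bp₁(H) ≤ (2k)^t`. -/
theorem bp_one_of_exactly_t_covered_edges {V : Type*} [Fintype V] (G : SimpleGraph V)
    (t k : ℕ) (B : Fin k → Set V × Set V) (hB : IsBicliqueCover G t B)
    (H : SimpleGraph V)
    (hH : ∀ x y, H.Adj x y ↔ (G.Adj x y ∧ coverCount B x y = t)) :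
    bp H 1 ≤ (2 * k) ^ t :=
  bp_one_of_exactly_t_covered_edges_general G t k B hB H hH
end
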